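/- Let S = ℝ[x,y,z] and let J = ⟨x^{s+1-i} y^i : 0 ≤ i ≤ s-r⟩ for integers 0 ≤ r ≤ s. Then for every d ≥ 0, dim (S/J)_d = C(d+2,2) - (s-r+1) C(d-s+1,2) + (s-r) C(d-s,2). -/

import Mathlib

open MvPolynomial

noncomputable section

/-- `S = ℝ[x,y,z]`. -/
abbrev S3 := MvPolynomial (Fin 3) ℝ

/-- Binomial coefficient `C(a,2)` with the convention `C(a,2) = 0` for `a < 2`. -/
def bin2 (a : ℤ) : ℤ := (a.toNat.choose 2 : ℤ)

namespace Stmt2Aux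

open Finset

/-- pairs (a,b) with a+b ≤ d -/
def pairsT (d : ℕ) : Finset (ℕ × ℕ) :=
  (Finset.range (d+1) ×ˢ Finset.range (d+1)).filter (fun p => p.1 + p.2 ≤ d)

def pairsB (s t d : ℕ) : Finset (ℕ × ℕ) :=
  (pairsT d).filter (fun p => s + 1 ≤ p.1 + min p.2 t)

lemma pairsB_subset (s t d : ℕ) : pairsB s t d ⊆ pairsT d := Finset.filter_subset _ _

lemma sum_range_sub (n m : ℕ) (h : n < m) :
    ∑ j ∈ range m, (n - j) = (n+1).choose 2 := by
  rw [range_eq_Ico, ← Finset.sum_Ico_consecutive _ (Nat.zero_le (n+1)) (by omega)]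
  have h2 : ∑ i ∈ Ico (n+1) m, (n - i) = 0 :=
    Finset.sum_eq_zero fun i hi => by simp only [Finset.mem_Ico] at hi; omega
  rw [h2, add_zero, ← range_eq_Ico]
  have := Finset.sum_range_reflect (fun j => j) (n+1)
  calc ∑ j ∈ range (n+1), (n - j) = ∑ j ∈ range (n+1), ((n+1) - 1 - j) := by
        apply Finset.sum_congr rfl; intro j hj; omega
    _ = ∑ j ∈ range (n+1), j := this
    _ = (n+1).choose 2 := by rw [Finset.sum_range_id, Nat.choose_two_right]

lemma card_pairsT (d : ℕ) : (pairsT d).card = (d+2).choose 2 := by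
  rw [Finset.card_eq_sum_card_fiberwise (f := fun p => p.2) (t := range (d+1))
    (by intro p hp; simp [pairsT] at hp ⊢; omega)]
  have hfib : ∀ b ∈ range (d+1),
      ((pairsT d).filter (fun p => p.2 = b)).card = d + 1 - b := by
    intro b hb
    have : (pairsT d).filter (fun p => p.2 = b) = (range (d+1-b)).image (fun a => (a, b)) := by
      ext p
      simp only [pairsT, Finset.mem_filter, Finset.mem_product, Finset.mem_range,
        Finset.mem_image]
      constructor
      · rintro ⟨⟨⟨h1, h2⟩, h3⟩, h4⟩
        exact ⟨p.1, by omega, by rw [← h4]⟩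
      · rintro ⟨a, ha, rfl⟩
        simp at hb ⊢; omega
    rw [this, Finset.card_image_of_injective _ (fun a a' h => by simpa using h),
      Finset.card_range]
  rw [Finset.sum_congr rfl hfib]
  have := Finset.sum_range_reflect (fun b => d + 1 - b) (d+1)
  calc ∑ b ∈ range (d+1), (d + 1 - b) = ∑ b ∈ range (d+1), (b + 1) := by
        rw [← this]; apply Finset.sum_congr rfl; intro j hj; simp at hj; omega
    _ = ∑ b ∈ range (d+2), b := by rw [Finset.sum_range_succ' (fun b => b) (d+1)]; simp
    _ = (d+2).choose 2 := by rw [Finset.sum_range_id, Nat.choose_two_right]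

lemma card_pairsB (s t d : ℕ) (hts : t ≤ s) :
    (pairsB s t d).card = t * (d - s) + (d + 1 - s).choose 2 := by
  rw [Finset.card_eq_sum_card_fiberwise (f := fun p => p.2) (t := range (d+1))
    (by intro p hp; simp [pairsB, pairsT] at hp ⊢; omega)]
  have hfib : ∀ b ∈ range (d+1),
      ((pairsB s t d).filter (fun p => p.2 = b)).card = (d + 1 - b) - (s + 1 - min b t) := by
    intro b hb
    simp only [Finset.mem_range] at hb
    have : (pairsB s t d).filter (fun p => p.2 = b)
        = (Ico (s + 1 - min b t) (d + 1 - b)).image (fun a => (a, b)) := by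
      ext p
      simp only [pairsB, pairsT, Finset.mem_filter, Finset.mem_product, Finset.mem_range,
        Finset.mem_image, Finset.mem_Ico]
      constructor
      · rintro ⟨⟨⟨⟨h1, h2⟩, h3⟩, h5⟩, h4⟩
        exact ⟨p.1, by omega, by rw [← h4]⟩
      · rintro ⟨a, ha, rfl⟩
        simp; omega
    rw [this, Finset.card_image_of_injective _ (fun a a' h => by simpa using h),
      Nat.card_Ico]
  rw [Finset.sum_congr rfl hfib]
  rcases lt_or_ge d s with hds | hds
  · have h0 : ∑ b ∈ range (d+1), ((d + 1 - b) - (s + 1 - min b t)) = 0 :=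
      Finset.sum_eq_zero fun b hb => by simp at hb; omega
    rw [h0]
    have : d + 1 - s ≤ 1 := by omega
    interval_cases h : (d + 1 - s) <;> simp <;> omega
  · rw [range_eq_Ico, ← Finset.sum_Ico_consecutive _ (Nat.zero_le t) (by omega : t ≤ d+1),
      ← range_eq_Ico]
    have h1 : ∑ b ∈ range t, ((d + 1 - b) - (s + 1 - min b t)) = t * (d - s) := by
      have hc : ∀ b ∈ range t, ((d + 1 - b) - (s + 1 - min b t)) = d - s := by
        intro b hb; simp only [Finset.mem_range] at hb
        have : min b t = b := by omega
        omega
      rw [Finset.sum_congr rfl hc]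
      simp [mul_comm]
    have h2 : ∑ b ∈ Ico t (d+1), ((d + 1 - b) - (s + 1 - min b t)) = (d + 1 - s).choose 2 := by
      rw [Finset.sum_Ico_eq_sum_range]
      have : ∀ j ∈ range (d + 1 - t),
          ((d + 1 - (t + j)) - (s + 1 - min (t+j) t)) = (d - s) - j := by
        intro j hj; simp at hj
        have : min (t+j) t = t := by omega
        omega
      rw [Finset.sum_congr rfl this, sum_range_sub (d - s) (d + 1 - t) (by omega)]
      congr 1; omega
    rw [h1, h2]

/-- Triple from a pair at total degree d. -/
noncomputable def toF3 (d : ℕ) (p : ℕ × ℕ) : Fin 3 →₀ ℕ :=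
  Finsupp.single 0 p.1 + Finsupp.single 1 p.2 + Finsupp.single 2 (d - p.1 - p.2)

lemma toF3_apply0 (d : ℕ) (p : ℕ × ℕ) : toF3 d p 0 = p.1 := by
  simp [toF3, Finsupp.single_apply]
lemma toF3_apply1 (d : ℕ) (p : ℕ × ℕ) : toF3 d p 1 = p.2 := by
  simp [toF3, Finsupp.single_apply]
lemma toF3_apply2 (d : ℕ) (p : ℕ × ℕ) : toF3 d p 2 = d - p.1 - p.2 := by
  simp [toF3, Finsupp.single_apply]

lemma degree_eq (σ : Fin 3 →₀ ℕ) : σ.degree = σ 0 + σ 1 + σ 2 := by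
  rw [Finsupp.degree_eq_sum]
  rw [Fin.sum_univ_three]

lemma toF3_degree (d : ℕ) (p : ℕ × ℕ) (h : p.1 + p.2 ≤ d) : (toF3 d p).degree = d := by
  rw [degree_eq, toF3_apply0, toF3_apply1, toF3_apply2]; omega

lemma eq_toF3 (d : ℕ) (σ : Fin 3 →₀ ℕ) (h : σ.degree = d) : σ = toF3 d (σ 0, σ 1) := by
  ext i
  rw [degree_eq] at h
  fin_cases i <;> simp only [Fin.isValue, Fin.zero_eta, Fin.mk_one]
  · rw [toF3_apply0]
  · rw [toF3_apply1]
  · show σ 2 = toF3 d (σ 0, σ 1) 2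
    rw [toF3_apply2]; omega

lemma single_le_iff (a b : ℕ) (σ : Fin 3 →₀ ℕ) :
    Finsupp.single (0 : Fin 3) a + Finsupp.single 1 b ≤ σ ↔ a ≤ σ 0 ∧ b ≤ σ 1 := by
  rw [Finsupp.le_def]
  constructor
  · intro h
    refine ⟨?_, ?_⟩
    · have := h 0; simpa [Finsupp.single_apply] using this
    · have := h 1; simpa [Finsupp.single_apply] using this
  · rintro ⟨h0, h1⟩ i
    fin_cases i <;> simp [Finsupp.single_apply] <;> omega

/-- The finsets of exponents. -/
noncomputable def TF (d : ℕ) : Finset (Fin 3 →₀ ℕ) := (pairsT d).image (toF3 d)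

noncomputable def BF (s t d : ℕ) : Finset (Fin 3 →₀ ℕ) := (pairsB s t d).image (toF3 d)

lemma toF3_injOn (d : ℕ) : Set.InjOn (toF3 d) ↑(pairsT d) := by
  intro p _ q _ h
  have h0 := congrArg (fun σ : Fin 3 →₀ ℕ => σ 0) h
  have h1 := congrArg (fun σ : Fin 3 →₀ ℕ => σ 1) h
  simp only [toF3_apply0, toF3_apply1] at h0 h1
  exact Prod.ext h0 h1

lemma card_TF (d : ℕ) : (TF d).card = (d+2).choose 2 := by
  rw [TF, Finset.card_image_of_injOn (toF3_injOn d), card_pairsT]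

lemma card_BF (s t d : ℕ) (hts : t ≤ s) :
    (BF s t d).card = t * (d - s) + (d + 1 - s).choose 2 := by
  rw [BF, Finset.card_image_of_injOn ((toF3_injOn d).mono (by
    exact_mod_cast pairsB_subset s t d)), card_pairsB s t d hts]

lemma card_BF_le (s t d : ℕ) : (BF s t d).card ≤ (TF d).card :=
  Finset.card_le_card (Finset.image_subset_image (pairsB_subset s t d))

lemma coe_TF (d : ℕ) : (↑(TF d) : Set (Fin 3 →₀ ℕ)) = {σ | σ.degree = d} := by
  ext σ
  simp only [TF, Finset.coe_image, Set.mem_image, Finset.mem_coe, Set.mem_setOf_eq]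
  constructor
  · rintro ⟨p, hp, rfl⟩
    simp only [pairsT, Finset.mem_filter] at hp
    exact toF3_degree d p hp.2
  · intro h
    refine ⟨(σ 0, σ 1), ?_, (eq_toF3 d σ h).symm⟩
    simp only [pairsT, Finset.mem_filter, Finset.mem_product, Finset.mem_range]
    rw [degree_eq] at h
    omega

lemma coe_BF (s t d : ℕ) (hts : t ≤ s) : (↑(BF s t d) : Set (Fin 3 →₀ ℕ)) =
    {σ | σ.degree = d ∧
      ∃ i ≤ t, Finsupp.single (0 : Fin 3) (s + 1 - i) + Finsupp.single 1 i ≤ σ} := by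
  ext σ
  simp only [BF, Finset.coe_image, Set.mem_image, Finset.mem_coe, Set.mem_setOf_eq]
  constructor
  · rintro ⟨p, hp, rfl⟩
    simp only [pairsB, pairsT, Finset.mem_filter, Finset.mem_product, Finset.mem_range] at hp
    obtain ⟨⟨⟨h1, h2⟩, h3⟩, h4⟩ := hp
    refine ⟨toF3_degree d p h3, min p.2 t, by omega, ?_⟩
    rw [single_le_iff, toF3_apply0, toF3_apply1]
    omega
  · rintro ⟨hdeg, i, hi, hle⟩
    rw [single_le_iff] at hle
    refine ⟨(σ 0, σ 1), ?_, (eq_toF3 d σ hdeg).symm⟩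
    simp only [pairsB, pairsT, Finset.mem_filter, Finset.mem_product, Finset.mem_range]
    rw [degree_eq] at hdeg
    omega

lemma finrank_supported_coe (A : Finset (Fin 3 →₀ ℕ)) :
    Module.finrank ℝ (AddMonoidAlgebra.supported ℝ ℝ (↑A : Set (Fin 3 →₀ ℕ))) = A.card := by
  rw [(AddMonoidAlgebra.supportedEquivFinsupp (R := ℝ) (S := ℝ) (↑A : Set (Fin 3 →₀ ℕ))).finrank_eq,
    Module.finrank_finsupp_self]
  simp

lemma choose_succ (s d : ℕ) : (d + 1 - s).choose 2 = (d - s).choose 2 + (d - s) := by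
  rcases le_or_gt s d with h | h
  · have : d + 1 - s = (d - s) + 1 := by omega
    rw [this, Nat.choose_succ_succ, Nat.choose_one_right, Nat.add_comm]
  · have h1 : d + 1 - s ≤ 1 := by omega
    have h2 : d - s = 0 := by omega
    interval_cases h3 : (d + 1 - s) <;> simp [h2]

end Stmt2Aux

open Stmt2Aux Finset

/-- For `0 ≤ r ≤ s` and the ideal `J = ⟨x^{s+1-i} y^i : 0 ≤ i ≤ s-r⟩` of `S = ℝ[x,y,z]`,
`dim (S/J)_d = C(d+2,2) - (s-r+1) C(d-s+1,2) + (s-r) C(d-s,2)` for every `d ≥ 0`. -/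
theorem stmt2 (r s d : ℕ) (hrs : r ≤ s) :
    (Module.finrank ℝ
      ↥(Submodule.map
          (Ideal.Quotient.mkₐ ℝ
            (Ideal.span {m : S3 | ∃ i ≤ s - r, m = X 0 ^ (s + 1 - i) * X 1 ^ i})).toLinearMap
          (homogeneousSubmodule (Fin 3) ℝ d)) : ℤ)
      = bin2 ((d : ℤ) + 2) - ((s : ℤ) - r + 1) * bin2 ((d : ℤ) - s + 1)
        + ((s : ℤ) - r) * bin2 ((d : ℤ) - s) := by
  set t := s - r with ht
  have hts : t ≤ s := Nat.sub_le s r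
  set J : Ideal S3 := Ideal.span {m : S3 | ∃ i ≤ s - r, m = X 0 ^ (s + 1 - i) * X 1 ^ i} with hJ
  set G : Set (Fin 3 →₀ ℕ) :=
    {g | ∃ i ≤ t, g = Finsupp.single (0 : Fin 3) (s + 1 - i) + Finsupp.single 1 i} with hG
  have hJ' : J = Ideal.span ((fun σ => monomial σ (1 : ℝ)) '' G) := by
    rw [hJ]
    congr 1
    ext m
    simp only [Set.mem_image, hG, Set.mem_setOf_eq, ← ht]
    constructor
    · rintro ⟨i, hi, rfl⟩
      refine ⟨_, ⟨i, hi, rfl⟩, ?_⟩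
      rw [X_pow_eq_monomial, X_pow_eq_monomial, monomial_mul, one_mul]
    · rintro ⟨g, ⟨i, hi, rfl⟩, rfl⟩
      refine ⟨i, hi, ?_⟩
      rw [X_pow_eq_monomial, X_pow_eq_monomial, monomial_mul, one_mul]
  set p : Submodule ℝ S3 := homogeneousSubmodule (Fin 3) ℝ d with hp
  set f : S3 →ₗ[ℝ] (S3 ⧸ J) := (Ideal.Quotient.mkₐ ℝ J).toLinearMap with hf
  have hker : LinearMap.ker f = J.restrictScalars ℝ := by
    ext x
    simp only [hf, LinearMap.mem_ker, AlgHom.toLinearMap_apply, Ideal.Quotient.mkₐ_eq_mk,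
      Ideal.Quotient.eq_zero_iff_mem, Submodule.restrictScalars_mem]
  -- the degree-d part is the supported submodule on TF
  have hT : p = AddMonoidAlgebra.supported ℝ ℝ (↑(TF d) : Set (Fin 3 →₀ ℕ)) := by
    rw [hp, homogeneousSubmodule_eq_finsupp_supported, coe_TF]
  -- intersection with the ideal
  have hB : p ⊓ J.restrictScalars ℝ = AddMonoidAlgebra.supported ℝ ℝ (↑(BF s t d) : Set (Fin 3 →₀ ℕ)) := by
    ext x
    rw [Submodule.mem_inf, AddMonoidAlgebra.mem_supported, coe_BF s t d hts]
    constructor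
    · rintro ⟨hhom, hmem⟩
      rw [Submodule.restrictScalars_mem, hJ', mem_ideal_span_monomial_image] at hmem
      intro xi hxi
      rw [Finset.mem_coe] at hxi
      have hdeg : xi.degree = d := by
        have := (mem_homogeneousSubmodule d x).mp hhom (MvPolynomial.mem_support_iff.mp hxi)
        rw [Finsupp.degree_eq_weight_one]
        exact this
      obtain ⟨g, hgG, hgle⟩ := hmem xi hxi
      obtain ⟨i, hi, rfl⟩ := hgG
      exact ⟨hdeg, i, hi, hgle⟩
    · intro hsub
      have hx : ∑ v ∈ x.support, monomial v (coeff v x) = x := support_sum_monomial_coeff x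
      constructor
      · rw [← hx]
        apply Submodule.sum_mem
        intro v hv
        rw [hp, mem_homogeneousSubmodule]
        exact isHomogeneous_monomial _ ((hsub (Finset.mem_coe.mpr hv)).1)
      · rw [Submodule.restrictScalars_mem, hJ', ← hx]
        apply Ideal.sum_mem
        intro v hv
        obtain ⟨hdeg, i, hi, hle⟩ := hsub (Finset.mem_coe.mpr hv)
        set g : Fin 3 →₀ ℕ := Finsupp.single (0 : Fin 3) (s + 1 - i) + Finsupp.single 1 i
        have hmono : monomial v (coeff v x) = monomial g 1 * monomial (v - g) (coeff v x) := by
          rw [monomial_mul, one_mul, add_tsub_cancel_of_le hle]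
        rw [hmono]
        exact Ideal.mul_mem_right _ _ (Ideal.subset_span ⟨g, ⟨i, hi, rfl⟩, rfl⟩)
  have hfinT : FiniteDimensional ℝ p := by
    rw [hT]
    exact Module.Finite.equiv (AddMonoidAlgebra.supportedEquivFinsupp (R := ℝ) (S := ℝ) (↑(TF d) : Set (Fin 3 →₀ ℕ))).symm
  -- rank-nullity
  have hrn := LinearMap.finrank_range_add_finrank_ker (f.domRestrict p)
  rw [LinearMap.range_domRestrict, LinearMap.ker_domRestrict] at hrn
  have hker_eq : Module.finrank ℝ ((LinearMap.ker f).comap p.subtype)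
      = Module.finrank ℝ (p ⊓ LinearMap.ker f : Submodule ℝ S3) := by
    rw [← Submodule.finrank_map_subtype_eq p, Submodule.map_comap_subtype]
  rw [hker_eq, hker] at hrn
  have hrp : Module.finrank ℝ p = (TF d).card := by
    rw [hT]; exact finrank_supported_coe (TF d)
  have hrB : Module.finrank ℝ (p ⊓ J.restrictScalars ℝ : Submodule ℝ S3) = (BF s t d).card := by
    rw [hB]; exact finrank_supported_coe (BF s t d)
  rw [hrp, hrB] at hrn
  have hmain : Module.finrank ℝ (Submodule.map f p) = (TF d).card - (BF s t d).card := by omega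
  rw [hmain, card_TF, card_BF s t d hts]
  -- final integer arithmetic
  have hle : t * (d - s) + (d + 1 - s).choose 2 ≤ (d + 2).choose 2 := by
    rw [← card_TF d, ← card_BF s t d hts]
    exact card_BF_le s t d
  have e1 : ((d : ℤ) + 2).toNat = d + 2 := by omega
  have e2 : ((d : ℤ) - s + 1).toNat = d + 1 - s := by omega
  have e3 : ((d : ℤ) - s).toNat = d - s := by omega
  have h1 : bin2 ((d : ℤ) + 2) = ((d + 2).choose 2 : ℤ) := by rw [bin2, e1]
  have h2 : bin2 ((d : ℤ) - s + 1) = ((d + 1 - s).choose 2 : ℤ) := by rw [bin2, e2]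
  have h3 : bin2 ((d : ℤ) - s) = ((d - s).choose 2 : ℤ) := by rw [bin2, e3]
  have h4 : (s : ℤ) - r = (t : ℤ) := by omega
  rw [h1, h2, h3, h4, Nat.cast_sub hle]
  have h5 : ((d + 1 - s).choose 2 : ℤ) = ((d - s).choose 2 : ℤ) + ((d - s : ℕ) : ℤ) := by
    exact_mod_cast choose_succ s d
  push_cast
  rw [h5]
  ring

end
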